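/- arXiv:1208.0985 — 2 statements merged into one kernel-verified Lean document; each statement's English description precedes it below -/
import Mathlib

section
/- Let f be a homeomorphism of ℝ² without fixed points, and let x ∈ ℝ². Then there exists r > 0 such that the closed Euclidean disk of radius r centered at x is critical for f: its interior is disjoint from its f-image while the closed disk itself meets its f-image. Moreover this radius r is unique. -/
/-- For a fixed point free homeomorphism of the plane and any point `x`, there is a unique
radius `r > 0` such that the closed Euclidean disk of radius `r` centered at `x` is critical:
its interior (the open ball) is disjoint from its image, but the closed disk meets its image. -/
theorem stmt_4 (f : ℂ ≃ₜ ℂ) (hfree : ∀ x : ℂ, f x ≠ x) (x : ℂ) :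
    ∃! r : ℝ, 0 < r ∧
      f '' Metric.ball x r ∩ Metric.ball x r = ∅ ∧
      (f '' Metric.closedBall x r ∩ Metric.closedBall x r).Nonempty := by
  set g : ℂ → ℝ := fun y => max (dist y x) (dist (f y) x) with hg
  have hgc : Continuous g :=
    (continuous_id.dist continuous_const).max (f.continuous.dist continuous_const)
  have hlim : Filter.Tendsto g (Filter.cocompact ℂ) Filter.atTop :=
    Filter.tendsto_atTop_mono (fun y => le_max_left _ _)
      (tendsto_dist_right_cocompact_atTop x)
  obtain ⟨y₀, hy₀⟩ := hgc.exists_forall_le hlim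
  set r := g y₀ with hr
  have hrpos : 0 < r := by
    rcases lt_or_eq_of_le (dist_nonneg.trans (le_max_left (dist y₀ x) (dist (f y₀) x))) with h | h
    · exact h
    · exfalso
      have h1 : dist y₀ x = 0 := le_antisymm (h ▸ le_max_left _ _) dist_nonneg
      have h2 : dist (f y₀) x = 0 := le_antisymm (h ▸ le_max_right _ _) dist_nonneg
      have : y₀ = x := by rwa [dist_eq_zero] at h1
      rw [this, dist_eq_zero] at h2
      exact hfree x h2
  refine ⟨r, ⟨hrpos, ?_, ?_⟩, ?_⟩
  · ext z
    simp only [Set.mem_inter_iff, Set.mem_image, Metric.mem_ball, Set.mem_empty_iff_false,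
      iff_false, not_and]
    rintro ⟨y, hy, rfl⟩ hz
    have : g y < r := max_lt hy hz
    exact absurd (hy₀ y) (not_le.mpr this)
  · refine ⟨f y₀, ⟨y₀, ?_, rfl⟩, ?_⟩
    · exact Metric.mem_closedBall.mpr (le_max_left _ _)
    · exact Metric.mem_closedBall.mpr (le_max_right _ _)
  · rintro r' ⟨hr'pos, hdisj, ⟨z, ⟨y, hy, rfl⟩, hz⟩⟩
    have h1 : r ≤ r' := (hy₀ y).trans (max_le (Metric.mem_closedBall.mp hy)
      (Metric.mem_closedBall.mp hz))
    have h2 : r' ≤ r := by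
      by_contra h
      push_neg at h
      have hmem : f y₀ ∈ f '' Metric.ball x r' ∩ Metric.ball x r' :=
        ⟨⟨y₀, Metric.mem_ball.mpr (lt_of_le_of_lt (le_max_left _ _) h), rfl⟩,
          Metric.mem_ball.mpr (lt_of_le_of_lt (le_max_right _ _) h)⟩
      simp [hdisj] at hmem
    exact le_antisymm h2 h1
end

section
/- Let G be a finite directed multigraph with vertex set T, and let T' ⊆ T be a nonempty subset of vertices such that from every vertex t ∈ T' there exist at least two distinct directed paths of the same length ending at vertices of T'. Then there exists a vertex t ∈ T' and a positive integer n such that there are at least two distinct directed closed paths (cycles) of length n based at t. -/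
/-!
Choose `s ∈ T'` that is maximal for reachability among the vertices of `T'`, i.e. every vertex
of `T'` reachable from `s` reaches `s` back. The two walks `p ≠ q` of equal length from `s` end in
`T'`, so they close up into cycles `A = p ++ w` and `B = q ++ w'` at `s`. Then `A ++ B` and
`B ++ A` are cycles of the same length, and they differ because their first `|p| = |q|` edges
are `p` and `q`.
-/

/-- `IsWalk src tgt a b p` : the list of edges `p` forms a directed path from `a` to `b`
in the directed multigraph with source and target maps `src`, `tgt`. -/
def IsWalk {V E : Type*} (src tgt : E → V) : V → V → List E → Prop
  | a, b, [] => a = b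
  | a, b, e :: p => src e = a ∧ IsWalk src tgt (tgt e) b p

theorem Set.Nonempty.exists_maximal_of_isPreorder {α : Type*} [Finite α] (r : α → α → Prop)
    [IsPreorder α r] {S : Set α} (hS : S.Nonempty) : ∃ s ∈ S, ∀ x ∈ S, r s x → r x s := by
  let _ : Preorder α := { le := r, le_refl := refl_of r, le_trans := fun _ _ _ => trans_of r }
  obtain ⟨s, hs, hmax⟩ := S.toFinite.exists_maximal hS
  exact ⟨s, hs, fun x hx => hmax hx⟩

namespace IsWalk

variable {V E : Type*} {src tgt : E → V}

theorem append {a b c : V} {p q : List E} (hp : IsWalk src tgt a b p)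
    (hq : IsWalk src tgt b c q) : IsWalk src tgt a c (p ++ q) := by
  induction p generalizing a with
  | nil => cases hp; exact hq
  | cons e p ih => exact ⟨hp.1, ih hp.2⟩

end IsWalk

def Reaches {V E : Type*} (src tgt : E → V) (a b : V) : Prop :=
  ∃ p, IsWalk src tgt a b p

instance {V E : Type*} (src tgt : E → V) : IsPreorder V (Reaches src tgt) where
  refl _ := ⟨[], rfl⟩
  trans _ _ _ := fun ⟨p, hp⟩ ⟨q, hq⟩ => ⟨p ++ q, hp.append hq⟩

theorem List.append_ne_append_of_length_eq {α : Type*} {p q : List α}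
    (hlen : p.length = q.length) (hpq : p ≠ q) (x y : List α) : p ++ x ≠ q ++ y :=
  fun h => hpq (List.append_inj_left h hlen)

theorem List.ne_nil_of_length_eq_of_ne {α : Type*} {p q : List α}
    (hlen : p.length = q.length) (hpq : p ≠ q) : p ≠ [] := by
  rintro rfl
  exact hpq (List.eq_nil_of_length_eq_zero hlen.symm).symm

theorem stmt_11_general {V E : Type*} [Finite V] (src tgt : E → V)
    (T' : Set V) (hne : T'.Nonempty)
    (hyp : ∀ t ∈ T', ∃ (p q : List E) (u v : V), u ∈ T' ∧ v ∈ T' ∧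
      IsWalk src tgt t u p ∧ IsWalk src tgt t v q ∧ p.length = q.length ∧ p ≠ q) :
    ∃ t ∈ T', ∃ n : ℕ, 0 < n ∧ ∃ p q : List E,
      IsWalk src tgt t t p ∧ IsWalk src tgt t t q ∧
      p.length = n ∧ q.length = n ∧ p ≠ q := by
  obtain ⟨s, hs, hback⟩ := hne.exists_maximal_of_isPreorder (Reaches src tgt)
  obtain ⟨p, q, u, v, hu, hv, hp, hq, hlen, hpq⟩ := hyp s hs
  obtain ⟨w, hw⟩ := hback u hu ⟨p, hp⟩
  obtain ⟨w', hw'⟩ := hback v hv ⟨q, hq⟩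
  have hA := hp.append hw
  have hB := hq.append hw'
  refine ⟨s, hs, _, ?_, _, _, hA.append hB, hB.append hA, rfl,
    by simp only [List.length_append]; omega, ?_⟩
  · simp [List.length_pos_iff, List.ne_nil_of_length_eq_of_ne hlen hpq]
  · simpa only [List.append_assoc] using List.append_ne_append_of_length_eq hlen hpq _ _

/-- In a finite directed multigraph, if from every vertex of a nonempty set `T'` there are two
distinct directed paths of the same length ending in `T'`, then some vertex of `T'` carries two
distinct directed cycles of the same (positive) length. -/
theorem stmt_11 {V E : Type*} [Finite V] [Finite E] (src tgt : E → V)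
    (T' : Set V) (hne : T'.Nonempty)
    (hyp : ∀ t ∈ T', ∃ (p q : List E) (u v : V), u ∈ T' ∧ v ∈ T' ∧
      IsWalk src tgt t u p ∧ IsWalk src tgt t v q ∧ p.length = q.length ∧ p ≠ q) :
    ∃ t ∈ T', ∃ n : ℕ, 0 < n ∧ ∃ p q : List E,
      IsWalk src tgt t t p ∧ IsWalk src tgt t t q ∧
      p.length = n ∧ q.length = n ∧ p ≠ q :=
  stmt_11_general src tgt T' hne hyp
end
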